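/- For μ ∈ ℝ and σ > 0, ∫_0^{2π} exp(i x) N(x; μ, σ) dx = (1/2) exp(i μ − σ²/2) · (erf((μ + i σ²)/(√2 σ)) − erf((μ − 2π + i σ²)/(√2 σ))), where erf is the complex error function. -/

import Mathlib

open MeasureTheory

/-- One-dimensional Gaussian density with mean `μ` and standard deviation `σ`. -/
noncomputable def gaussDensity (μ σ x : ℝ) : ℝ :=
  (1 / (Real.sqrt (2 * Real.pi) * σ)) * Real.exp (-(x - μ) ^ 2 / (2 * σ ^ 2))

/-- Complex error function: `(2/√π)` times the integral of `exp(-w²)` along the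
segment from `0` to `z`. -/
noncomputable def cerf (z : ℂ) : ℂ :=
  (2 / (Real.sqrt Real.pi : ℂ)) * ∫ t in (0 : ℝ)..1, z * Complex.exp (-((t : ℂ) * z) ^ 2)

/-!
Completing the square, `exp (i x) N(x; μ, σ)` is a constant multiple of `exp (-((c - x) / k) ^ 2)`
with `c = μ + i σ²` and `k = √2 σ`, so an antiderivative is a multiple of `cerf ((c - x) / k)`.
That `cerf` is holomorphic with derivative `(2 / √π) exp (-z²)` follows because `exp (-w²)` has an
entire primitive `G` (Morera), and the segment integral defining `cerf z` is `G z - G 0`.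
-/

open Complex

theorem integral_segment_eq_sub_of_hasDerivAt {f G : ℂ → ℂ} (hG : ∀ w, HasDerivAt G (f w) w)
    (hf : Continuous f) (z : ℂ) :
    ∫ t in (0 : ℝ)..1, z * f (t * z) = G z - G 0 := by
  have hderiv (t : ℝ) : HasDerivAt (fun t : ℝ ↦ G (t * z)) (z * f (t * z)) t := by
    simpa [mul_comm] using ((hG _).comp _ ((hasDerivAt_id (t : ℂ)).mul_const z)).comp_ofReal
  rw [intervalIntegral.integral_eq_sub_of_hasDerivAt (fun t _ ↦ hderiv t)
    (by apply Continuous.intervalIntegrable; fun_prop)]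
  simp

theorem cerf_hasDerivAt (z : ℂ) :
    HasDerivAt cerf (2 / (Real.sqrt Real.pi : ℂ) * exp (-z ^ 2)) z := by
  obtain ⟨G, hG⟩ : IsExactOn (fun w ↦ exp (-w ^ 2)) Set.univ :=
    Differentiable.isExactOn_univ (by fun_prop)
  have hcerf : cerf = fun w ↦ 2 / (Real.sqrt Real.pi : ℂ) * (G w - G 0) := by
    ext w
    rw [cerf, ← integral_segment_eq_sub_of_hasDerivAt (fun w ↦ hG w trivial) (by fun_prop)]
  rw [hcerf]
  exact ((hG z trivial).sub_const _).const_mul _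

theorem hasDerivAt_cerf_sub_div (c k : ℂ) (x : ℝ) :
    HasDerivAt (fun x : ℝ ↦ cerf ((c - x) / k))
      (-(2 / (Real.sqrt Real.pi * k)) * exp (-((c - x) / k) ^ 2)) x := by
  refine (((cerf_hasDerivAt _).comp (x : ℂ)
    (((hasDerivAt_id (x : ℂ)).const_sub c).div_const k)).comp_ofReal).congr_deriv ?_
  simp only [id]
  ring

theorem exp_I_mul_gaussDensity (μ σ x : ℝ) (hσ : σ ≠ 0) :
    exp (I * x) * (gaussDensity μ σ x : ℂ) =
      exp (I * μ - (σ : ℂ) ^ 2 / 2) / (Real.sqrt Real.pi * (Real.sqrt 2 * σ)) *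
        exp (-((μ + I * (σ : ℂ) ^ 2 - x) / (Real.sqrt 2 * σ)) ^ 2) := by
  have hsqrt2 : ((Real.sqrt 2 : ℝ) : ℂ) ^ 2 = 2 := by
    rw [← ofReal_pow, Real.sq_sqrt zero_le_two]; norm_num
  have hsqrt2pi : ((Real.sqrt (2 * Real.pi) : ℝ) : ℂ) = Real.sqrt Real.pi * Real.sqrt 2 := by
    rw [Real.sqrt_mul zero_le_two, ofReal_mul, mul_comm]
  have hexponent : I * x + ((-(x - μ) ^ 2 / (2 * σ ^ 2) : ℝ) : ℂ) =
      (I * μ - (σ : ℂ) ^ 2 / 2) + -((μ + I * (σ : ℂ) ^ 2 - x) / (Real.sqrt 2 * σ)) ^ 2 := by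
    have hσ' : (σ : ℂ) ≠ 0 := ofReal_ne_zero.mpr hσ
    rw [div_pow, mul_pow, hsqrt2]
    push_cast
    field_simp
    ring_nf
    rw [I_sq]
    ring
  rw [gaussDensity, ofReal_mul, ofReal_exp, mul_left_comm, ← exp_add, hexponent, exp_add,
    one_div, ofReal_inv, ofReal_mul, hsqrt2pi]
  ring

/-- Closed form of the truncated first circular moment of a Gaussian density in terms of the
complex error function. -/
theorem gauss_circular_moment_erf (μ σ : ℝ) (hσ : 0 < σ) :
    ∫ x in (0 : ℝ)..(2 * Real.pi),
        Complex.exp (Complex.I * (x : ℂ)) * (gaussDensity μ σ x : ℂ) =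
      (1 / 2) * Complex.exp (Complex.I * (μ : ℂ) - (σ : ℂ) ^ 2 / 2) *
        (cerf (((μ : ℂ) + Complex.I * (σ : ℂ) ^ 2) / (Real.sqrt 2 * (σ : ℂ))) -
          cerf (((μ : ℂ) - 2 * Real.pi + Complex.I * (σ : ℂ) ^ 2) / (Real.sqrt 2 * (σ : ℂ)))) := by
  set c : ℂ := μ + I * (σ : ℂ) ^ 2
  set k : ℂ := Real.sqrt 2 * σ
  set a : ℂ := exp (I * μ - (σ : ℂ) ^ 2 / 2)
  have hderiv (x : ℝ) : HasDerivAt (fun x : ℝ ↦ -(1 / 2) * a * cerf ((c - x) / k))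
      (exp (I * x) * (gaussDensity μ σ x : ℂ)) x := by
    refine ((hasDerivAt_cerf_sub_div c k x).const_mul (-(1 / 2) * a)).congr_deriv ?_
    rw [exp_I_mul_gaussDensity μ σ x hσ.ne']
    ring
  rw [intervalIntegral.integral_eq_sub_of_hasDerivAt (fun x _ ↦ hderiv x)
    (by apply Continuous.intervalIntegrable; unfold gaussDensity; fun_prop)]
  simp only [ofReal_zero, sub_zero, ofReal_mul, ofReal_ofNat]
  rw [show c - 2 * Real.pi = μ - 2 * Real.pi + I * (σ : ℂ) ^ 2 by ring]
  ring
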